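/- If M : [T,∞) → ℝ is differentiable, e^{-t}M(t) → 0 as t → ∞, and for all t ≥ T one has M'(t) - M(t) ≤ -c/√t with c > 0 (one-sided bound), then M(t) ≥ c·(1 - e^{-t})/√(2t) for all t ≥ T; in particular |M(t)| ≳ 1/√t for large t. -/

import Mathlib

/-!
With `g(s) = e^{-s} M(s)` the hypothesis reads `g' = e^{-s}(M' - M) ≤ -c e^{-s}/√s`. In particular
`g` is antitone, and since `g → 0` it is nonnegative. On `[t, 2t]` the derivative bound is at most
`-K e^{-s}` with `K = c/√(2t)`, so comparing `g` with `K e^{-s}` between `t` and `2t` gives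
`e^{-t} M(t) ≥ K (e^{-t} - e^{-2t}) + e^{-2t} M(2t) ≥ K (e^{-t} - e^{-2t})`.
-/

open Real Filter Set

theorem sub_le_sub_of_hasDerivAt_le {f g f' g' : ℝ → ℝ} {a b : ℝ} (hab : a ≤ b)
    (hf : ∀ x ∈ Icc a b, HasDerivAt f (f' x) x) (hg : ∀ x ∈ Icc a b, HasDerivAt g (g' x) x)
    (hle : ∀ x ∈ Ioo a b, f' x ≤ g' x) : f b - f a ≤ g b - g a := by
  have hderiv : ∀ x ∈ Icc a b, HasDerivAt (f - g) (f' x - g' x) x :=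
    fun x hx => (hf x hx).sub (hg x hx)
  have hanti : AntitoneOn (f - g) (Icc a b) := by
    apply antitoneOn_of_deriv_nonpos (convex_Icc a b)
    · exact fun x hx => (hderiv x hx).continuousAt.continuousWithinAt
    · rw [interior_Icc]
      exact fun x hx => (hderiv x (Ioo_subset_Icc_self hx)).differentiableAt.differentiableWithinAt
    · rw [interior_Icc]
      intro x hx
      rw [(hderiv x (Ioo_subset_Icc_self hx)).deriv]
      exact sub_nonpos.2 (hle x hx)
  have := hanti (left_mem_Icc.2 hab) (right_mem_Icc.2 hab) hab
  simp only [Pi.sub_apply] at this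
  linarith

theorem hasDerivAt_exp_neg (x : ℝ) : HasDerivAt (fun s => exp (-s)) (-exp (-x)) x := by
  simpa using (hasDerivAt_neg x).exp

theorem mul_exp_neg_sub_le_of_deriv_sub_le {M M' : ℝ → ℝ} {a b K : ℝ} (hab : a ≤ b)
    (hderiv : ∀ x ∈ Icc a b, HasDerivAt M (M' x) x)
    (hbound : ∀ x ∈ Ioo a b, M' x - M x ≤ -K) :
    K * (exp (-a) - exp (-b)) ≤ exp (-a) * M a - exp (-b) * M b := by
  have hcomp := sub_le_sub_of_hasDerivAt_le (f := fun s => exp (-s) * M s)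
    (g := fun s => K * exp (-s)) (f' := fun x => exp (-x) * (M' x - M x))
    (g' := fun x => K * -exp (-x)) hab
    (fun x hx => ((hasDerivAt_exp_neg x).mul (hderiv x hx)).congr_deriv (by ring))
    (fun x _ => (hasDerivAt_exp_neg x).const_mul K)
    (fun x hx => by nlinarith [exp_pos (-x), hbound x hx])
  linarith

theorem nonneg_of_deriv_le_self_of_tendsto {M M' : ℝ → ℝ} {T : ℝ}
    (hderiv : ∀ t ≥ T, HasDerivAt M (M' t) t)
    (hlim : Tendsto (fun t => exp (-t) * M t) atTop (nhds 0))
    (hle : ∀ t ≥ T, M' t ≤ M t) {t : ℝ} (ht : T ≤ t) : 0 ≤ M t := by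
  have hdecay : 0 ≤ exp (-t) * M t := by
    refine le_of_tendsto hlim ?_
    filter_upwards [eventually_ge_atTop t] with s hs
    have := mul_exp_neg_sub_le_of_deriv_sub_le (K := 0) hs
      (fun x hx => hderiv x (ht.trans hx.1)) (fun x hx => by linarith [hle x (ht.trans hx.1.le)])
    linarith
  exact nonneg_of_mul_nonneg_right hdecay (exp_pos _)

theorem mass_lower_bound_one_sided
    (M M' : ℝ → ℝ) (T c : ℝ) (hc : 0 < c)
    (hderiv : ∀ t ≥ T, HasDerivAt M (M' t) t)
    (hlim : Tendsto (fun t => Real.exp (-t) * M t) atTop (nhds 0))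
    (hbound : ∀ t ≥ T, M' t - M t ≤ -c / Real.sqrt t) :
    ∀ t ≥ T, c * (1 - Real.exp (-t)) / Real.sqrt (2 * t) ≤ M t := by
  have hM_nonneg : ∀ t ≥ T, 0 ≤ M t := fun t ht =>
    nonneg_of_deriv_le_self_of_tendsto hderiv hlim (fun s hs => by
      have : -c / √s ≤ 0 := div_nonpos_of_nonpos_of_nonneg (by linarith) (sqrt_nonneg s)
      linarith [hbound s hs]) ht
  intro t ht
  rcases le_or_gt t 0 with ht0 | ht0
  · rw [sqrt_eq_zero'.2 (by linarith), div_zero]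
    exact hM_nonneg t ht
  set K := c / √(2 * t)
  have hinterval : ∀ x ∈ Ioo t (2 * t), M' x - M x ≤ -K := fun x hx => by
    have : K ≤ c / √x := div_le_div_of_nonneg_left hc.le (sqrt_pos.2 (ht0.trans hx.1))
      (sqrt_le_sqrt hx.2.le)
    linarith [hbound x (ht.trans hx.1.le), neg_div √x c]
  have hcomp := mul_exp_neg_sub_le_of_deriv_sub_le (by linarith)
    (fun x hx => hderiv x (ht.trans hx.1)) hinterval
  have htail : 0 ≤ exp (-(2 * t)) * M (2 * t) :=
    mul_nonneg (exp_pos _).le (hM_nonneg _ (by linarith))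
  have hexp_two : exp (-(2 * t)) = exp (-t) * exp (-t) := by rw [← exp_add]; ring_nf
  have : exp (-t) * (K * (1 - exp (-t))) ≤ exp (-t) * M t := by
    rw [hexp_two] at hcomp htail
    linarith
  calc c * (1 - exp (-t)) / √(2 * t) = K * (1 - exp (-t)) := by ring
    _ ≤ M t := le_of_mul_le_mul_left this (exp_pos _)
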